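/- Let g be an invertible symmetric 4×4 real matrix, let h be a symmetric 4×4 real matrix, and set f = (1/2)·g⁻¹ * h. For ε ∈ ℝ near 0 set F(ε) = 1 + ε·f. For each k ∈ Fin 4 define the deformed Dirac γ-field component γ̂_k(ε) = Σ_{q ∈ Fin 4} (F(ε)⁻¹)^q_k · m_q, a 4×4 complex matrix. Then ε ↦ γ̂_k(ε) is differentiable at ε = 0 with derivative −(1/2) Σ_{p,q ∈ Fin 4} (g⁻¹)^{qp} h_{pk} · m_q. (This is the variation δγ^a_{bk} = −(1/2) Σ_{p,q} g^{pq} γ^a_{bq} ε h_{pk} of the Dirac γ-field under the metric deformation.) -/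

import Mathlib

open Matrix

/-- The four Dirac matrices `m₀, m₁, m₂, m₃`, the components of the Dirac `γ`-field
in a canonically associated frame pair. -/
noncomputable def diracMat : Fin 4 → Matrix (Fin 4) (Fin 4) ℂ :=
  ![!![0, 0, 1, 0; 0, 0, 0, 1; 1, 0, 0, 0; 0, 1, 0, 0],
    !![0, 0, 0, 1; 0, 0, 1, 0; 0, -1, 0, 0; -1, 0, 0, 0],
    !![0, 0, 0, -Complex.I; 0, 0, Complex.I, 0; 0, Complex.I, 0, 0; -Complex.I, 0, 0, 0],
    !![0, 0, 1, 0; 0, 0, 0, -1; -1, 0, 0, 0; 0, 1, 0, 0]]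

/-- The deformation operator `F ε = 1 + ε • ((1/2) • (g⁻¹ * h))`. -/
noncomputable def deformOp (g h : Matrix (Fin 4) (Fin 4) ℝ) (ε : ℝ) :
    Matrix (Fin 4) (Fin 4) ℝ :=
  1 + ε • ((1/2 : ℝ) • (g⁻¹ * h))

/-- The deformed Dirac `γ`-field components `γ̂_k ε = ∑_q ((F ε)⁻¹)^q_k • m_q` in the
deformed frame pair. -/
noncomputable def gammaHat (g h : Matrix (Fin 4) (Fin 4) ℝ) (k : Fin 4) (ε : ℝ) :
    Matrix (Fin 4) (Fin 4) ℂ :=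
  ∑ q : Fin 4, (((deformOp g h ε)⁻¹ q k : ℝ) : ℂ) • diracMat q

/-!
Since `F 0 = 1`, the derivative of `ε ↦ (F ε)⁻¹` at `0` is `-F'(0) = -(1/2) g⁻¹ h`, by the
derivative `t ↦ -x⁻¹ t x⁻¹` of inversion in a complete normed algebra, taken at `x = 1`. Each
entry of `γ̂_k` is a fixed linear combination of the real entries `(F ε)⁻¹ q k`, so it is
differentiated termwise.
-/

theorem hasDerivAt_ringInverse_one_add_smul {𝕜 R : Type*} [NontriviallyNormedField 𝕜]
    [NormedRing R] [HasSummableGeomSeries R] [NormedAlgebra 𝕜 R] (c : R) :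
    HasDerivAt (fun ε : 𝕜 => Ring.inverse (1 + ε • c)) (-c) 0 := by
  have hpath : HasDerivAt (fun ε : 𝕜 => 1 + ε • c) c 0 := by
    simpa using ((hasDerivAt_id (0 : 𝕜)).smul_const c).const_add 1
  have hinv : HasFDerivAt (Ring.inverse : R → R) (-ContinuousLinearMap.mulLeftRight 𝕜 R 1 1)
      (1 + (0 : 𝕜) • c) := by
    simpa using hasFDerivAt_ringInverse (𝕜 := 𝕜) (1 : Rˣ)
  refine (hinv.comp_hasDerivAt (0 : 𝕜) hpath).congr_deriv ?_
  simp

section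

-- Matrices carry no global norm; any submultiplicative one gives the product topology.
attribute [local instance] Matrix.linftyOpNormedRing Matrix.linftyOpNormedAlgebra

theorem Matrix.hasDerivAt_inv_one_add_smul_apply {n 𝕜 : Type*} [Fintype n] [DecidableEq n]
    [RCLike 𝕜] (c : Matrix n n 𝕜) (i j : n) :
    HasDerivAt (fun ε : 𝕜 => (1 + ε • c)⁻¹ i j) (-c i j) 0 := by
  simp only [Matrix.nonsing_inv_eq_ringInverse]
  exact ((Matrix.entryLinearMap 𝕜 𝕜 i j).toContinuousLinearMap.hasFDerivAt).comp_hasDerivAt 0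
    (hasDerivAt_ringInverse_one_add_smul c)

end

theorem hasDerivAt_sum_ofReal_smul_apply {ι m n : Type*} [Fintype ι] {A : ℝ → ι → ℝ}
    {A' : ι → ℝ} {x : ℝ} (hA : ∀ q, HasDerivAt (fun ε => A ε q) (A' q) x)
    (M : ι → Matrix m n ℂ) (a : m) (b : n) :
    HasDerivAt (fun ε => (∑ q, (A ε q : ℂ) • M q) a b) ((∑ q, (A' q : ℂ) • M q) a b) x := by
  simp only [Matrix.sum_apply, Matrix.smul_apply, smul_eq_mul]
  exact HasDerivAt.fun_sum fun q _ => ((hA q).ofReal_comp).mul_const (M q a b)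

theorem dirac_gamma_field_variation_general
    (g h : Matrix (Fin 4) (Fin 4) ℝ) :
    ∀ k : Fin 4, ∀ a b : Fin 4,
      HasDerivAt (fun ε : ℝ => gammaHat g h k ε a b)
        ((-(1/2 : ℂ) • ∑ p : Fin 4, ∑ q : Fin 4,
            ((g⁻¹ q p * h p k : ℝ) : ℂ) • diracMat q) a b)
        0 := by
  intro k a b
  have hF (q : Fin 4) : HasDerivAt (fun ε => (deformOp g h ε)⁻¹ q k)
      (-((1/2 : ℝ) • (g⁻¹ * h)) q k) 0 :=
    Matrix.hasDerivAt_inv_one_add_smul_apply _ q k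
  have hvalue : -(1/2 : ℂ) • ∑ p : Fin 4, ∑ q : Fin 4, ((g⁻¹ q p * h p k : ℝ) : ℂ) • diracMat q
      = ∑ q, ((-((1/2 : ℝ) • (g⁻¹ * h)) q k : ℝ) : ℂ) • diracMat q := by
    rw [Finset.sum_comm, Finset.smul_sum]
    refine Finset.sum_congr rfl fun q _ => ?_
    simp only [← Finset.sum_smul, smul_smul, Matrix.smul_apply, Matrix.mul_apply,
      smul_eq_mul]
    push_cast
    rw [← neg_mul, Finset.mul_sum]
  rw [hvalue]
  exact hasDerivAt_sum_ofReal_smul_apply hF diracMat a b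

/-- Under the metric deformation by `F ε = 1 + ε • ((1/2) • (g⁻¹ * h))`, the
deformed Dirac `γ`-field components `γ̂_k ε = ∑_q ((F ε)⁻¹)^q_k • m_q` are differentiable
(entrywise) at `ε = 0` with derivative `-(1/2) ∑_{p,q} (g⁻¹)^{qp} h_{pk} • m_q`. -/
theorem dirac_gamma_field_variation
    (g h : Matrix (Fin 4) (Fin 4) ℝ)
    (hginv : IsUnit g.det) (hgsymm : g.IsSymm) (hhsymm : h.IsSymm) :
    ∀ k : Fin 4, ∀ a b : Fin 4,
      HasDerivAt (fun ε : ℝ => gammaHat g h k ε a b)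
        ((-(1/2 : ℂ) • ∑ p : Fin 4, ∑ q : Fin 4,
            ((g⁻¹ q p * h p k : ℝ) : ℂ) • diracMat q) a b)
        0 :=
  dirac_gamma_field_variation_general g h
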